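/- arXiv:2308.01106 — 5 statements merged into one kernel-verified Lean document; each statement's English description precedes it below -/
import Mathlib

section
/- Let G be a torsion-free abelian group and let α₁,…,α_q be elements of G. Suppose the q-tuple (α₁,…,α_q) has the property (P_{r,s}) with q ≥ r > s ≥ 1, i.e., for any r indices l(1)<…<l(r) in {1,…,q} and any s distinct indices i₁,…,i_s ∈ {1,…,r}, there exist distinct indices j₁,…,j_s ∈ {1,…,r} with {j₁,…,j_s} ≠ {i₁,…,i_s} such that α_{l(i₁)}·…·α_{l(i_s)} = α_{l(j₁)}·…·α_{l(j_s)}. Then there exist (q−r+2) distinct indices i₁,…,i_{q−r+2} ∈ {1,…,q} such that α_{i₁} = α_{i₂} = … = α_{i_{q−r+2}}. -/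
/-- Property `(P_{r,s})` of a `q`-tuple `α` of elements of a (torsion-free) abelian group:
for any choice of `r` of the indices, every product of the `α`'s over `s` of the chosen
indices equals the product over a different `s`-element subset of the chosen indices. -/
def HasPropP {G : Type*} [CommGroup G] {q : ℕ} (α : Fin q → G) (r s : ℕ) : Prop :=
  ∀ T : Finset (Fin q), T.card = r →
    ∀ I ⊆ T, I.card = s →
      ∃ J ⊆ T, J.card = s ∧ J ≠ I ∧ ∏ i ∈ I, α i = ∏ j ∈ J, α j

/-!
The subgroup generated by the `α i` is finitely generated and torsion-free, hence free abelian,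
so it embeds into `ℤⁿ` with the lexicographic order; we may therefore assume `G` is linearly
ordered and, after a permutation, that `α` is monotone. If the `s`-th and the `(q - r + s + 1)`-th
values differed, then in the `r`-set formed by the `s` smallest and the `r - s` largest indices the
`s` smallest would be the only `s`-subset with the smallest product, contradicting `(P_{r,s})`.
Hence these two values agree, and so do the `q - r + 2` values between them.
-/

open Finset

theorem Finset.prod_lt_prod_of_card_eq_of_le_of_lt {ι M : Type*} [CommMonoid M]
    [PartialOrder M] [IsOrderedCancelMonoid M] [DecidableEq ι] {I J : Finset ι} {f : ι → M}
    {v : M} (hcard : #J = #I) (hne : J ≠ I) (hI : ∀ i ∈ I, f i ≤ v)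
    (hJ : ∀ j ∈ J \ I, v < f j) :
    ∏ i ∈ I, f i < ∏ j ∈ J, f j := by
  have hJI : (J \ I).Nonempty :=
    sdiff_nonempty.2 fun h ↦ hne (eq_of_subset_of_card_le h hcard.ge)
  rw [← prod_sdiff_lt_prod_sdiff]
  calc ∏ i ∈ I \ J, f i ≤ v ^ #(I \ J) :=
        prod_le_pow_card _ _ _ fun i hi ↦ hI i (mem_sdiff.1 hi).1
    _ = ∏ _j ∈ J \ I, v := by rw [prod_const, card_sdiff_comm hcard.symm]
    _ < ∏ j ∈ J \ I, f j := prod_lt_prod_of_nonempty' hJI hJ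

section HasPropP

variable {G N : Type*} [CommGroup G] [CommGroup N] {q r s : ℕ} {α : Fin q → G}

theorem hasPropP_comp_iff {f : G →* N} (hf : Function.Injective f) :
    HasPropP (f ∘ α) r s ↔ HasPropP α r s := by
  simp only [HasPropP, Function.comp_apply, ← map_prod, hf.eq_iff]

theorem HasPropP.comp_perm (h : HasPropP α r s) (σ : Equiv.Perm (Fin q)) :
    HasPropP (α ∘ σ) r s := by
  intro T hT I hIT hI
  obtain ⟨J, hJT, hJ, hJI, hprod⟩ := h (T.map σ.toEmbedding) (by simpa) (I.map σ.toEmbedding)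
    (map_subset_map.2 hIT) (by simpa)
  refine ⟨J.map σ.symm.toEmbedding, map_symm_subset.2 hJT, by simpa, ?_, ?_⟩
  · rintro rfl
    exact hJI (by simp [map_map])
  · simpa [prod_map] using hprod

theorem HasPropP.exists_card_eq_of_monotone [LinearOrder G] [IsOrderedMonoid G]
    (h : HasPropP α r s) (hmono : Monotone α) (hs : 1 ≤ s) (hsr : s < r) (hrq : r ≤ q) :
    ∃ S : Finset (Fin q), #S = q - r + 2 ∧ ∀ i ∈ S, ∀ j ∈ S, α i = α j := by
  obtain ⟨a, ha⟩ : ∃ a : Fin q, (a : ℕ) = s - 1 := ⟨⟨s - 1, by omega⟩, rfl⟩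
  obtain ⟨b, hb⟩ : ∃ b : Fin q, (b : ℕ) = q - r + s := ⟨⟨q - r + s, by omega⟩, rfl⟩
  have hab : a < b := Fin.lt_def.2 (by omega)
  refine ⟨Icc a b, by rw [Fin.card_Icc]; omega, ?_⟩
  suffices hconst : α a = α b by
    have hmid (i) (hi : i ∈ Icc a b) : α i = α a :=
      le_antisymm ((hmono (mem_Icc.1 hi).2).trans hconst.ge) (hmono (mem_Icc.1 hi).1)
    intro i hi j hj
    rw [hmid i hi, hmid j hj]
  by_contra hne
  have hlt : α a < α b := (hmono hab.le).lt_of_ne hne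
  have hdisj : Disjoint (Iic a) (Ici b) :=
    disjoint_left.2 fun x hxa hxb ↦ (hab.trans_le (mem_Ici.1 hxb)).not_ge (mem_Iic.1 hxa)
  have hT : #(Iic a ∪ Ici b) = r := by
    rw [card_union_of_disjoint hdisj, Fin.card_Iic, Fin.card_Ici]; omega
  obtain ⟨J, hJT, hJ, hJI, hprod⟩ :=
    h _ hT (Iic a) subset_union_left (by rw [Fin.card_Iic]; omega)
  have hgt (j) (hj : j ∈ J \ Iic a) : α a < α j := by
    obtain ⟨hjJ, hja⟩ := mem_sdiff.1 hj
    have hjb := (mem_union.1 (hJT hjJ)).resolve_left hja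
    exact hlt.trans_le (hmono (mem_Ici.1 hjb))
  have hJcard : #J = #(Iic a) := by rw [hJ, Fin.card_Iic]; omega
  exact (prod_lt_prod_of_card_eq_of_le_of_lt hJcard hJI (fun i hi ↦ hmono (mem_Iic.1 hi)) hgt).ne
    hprod

theorem HasPropP.exists_card_eq_of_linearOrder [LinearOrder G] [IsOrderedMonoid G]
    (h : HasPropP α r s) (hs : 1 ≤ s) (hsr : s < r) (hrq : r ≤ q) :
    ∃ S : Finset (Fin q), #S = q - r + 2 ∧ ∀ i ∈ S, ∀ j ∈ S, α i = α j := by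
  obtain ⟨S, hS, hconst⟩ :=
    (h.comp_perm (Tuple.sort α)).exists_card_eq_of_monotone (Tuple.monotone_sort α) hs hsr hrq
  refine ⟨S.map (Tuple.sort α).toEmbedding, by rwa [card_map], ?_⟩
  simp only [mem_map_equiv]
  intro i hi j hj
  simpa using hconst _ hi _ hj

end HasPropP

theorem exists_injective_monoidHom_lex (G : Type*) [CommGroup G] [Group.FG G]
    [IsMulTorsionFree G] :
    ∃ n : ℕ, ∃ φ : G →* Multiplicative (Lex (Fin n →₀ ℤ)), Function.Injective φ := by
  have : Module.Finite ℤ (Additive G) := AddMonoid.FG.to_moduleFinite_int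
  obtain ⟨n, b⟩ := Module.basisOfFiniteTypeTorsionFree' (R := ℤ) (M := Additive G)
  exact ⟨n, AddMonoidHom.toMultiplicativeRight
      ((toLexAddEquiv _).toAddMonoidHom.comp b.repr.toAddMonoidHom),
    (toLexAddEquiv _).injective.comp b.repr.injective⟩

theorem stmt0 {G : Type*} [CommGroup G] (hG : ∀ g : G, g ≠ 1 → ¬IsOfFinOrder g)
    {q r s : ℕ} (hs : 1 ≤ s) (hsr : s < r) (hrq : r ≤ q)
    (α : Fin q → G) (hα : HasPropP α r s) :
    ∃ S : Finset (Fin q), S.card = q - r + 2 ∧ ∀ i ∈ S, ∀ j ∈ S, α i = α j := by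
  have : IsMulTorsionFree G := isMulTorsionFree_iff_not_isOfFinOrder.2 hG
  let H := Subgroup.closure (Set.range α)
  let β : Fin q → H := fun i ↦ ⟨α i, Subgroup.subset_closure ⟨i, rfl⟩⟩
  have hβ : HasPropP β r s := (hasPropP_comp_iff H.subtype_injective).1 hα
  obtain ⟨n, φ, hφ⟩ := exists_injective_monoidHom_lex H
  obtain ⟨S, hS, hconst⟩ :=
    ((hasPropP_comp_iff hφ).2 hβ).exists_card_eq_of_linearOrder hs hsr hrq
  exact ⟨S, hS, fun i hi j hj ↦ congrArg Subtype.val (hφ (hconst i hi j hj))⟩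
end

section
/- Let G be a torsion-free abelian group and let (α₁,…,α_q) be a q-tuple of elements of G having property (P_{r,s}) with q ≥ r > s ≥ 1, r ≤ 2s, and q ≥ 2s−1. Then there exist l := q−2(r−s)+2 distinct indices i₁,…,i_l ∈ {1,…,q} such that α_{i₁} = α_{i₂} = … = α_{i_l}. -/
open Finset

namespace Finset

variable {ι M : Type*} [CancelCommMonoid M] [LinearOrder M] [IsOrderedCancelMonoid M]
  {f : ι → M}

theorem exists_le_of_prod_eq_of_card_eq {A B : Finset ι} (hA : A.Nonempty) (hcard : #A = #B)
    (hprod : ∏ i ∈ A, f i = ∏ j ∈ B, f j) : ∃ i ∈ A, ∃ j ∈ B, f j ≤ f i := by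
  obtain ⟨i, hi, hmax⟩ := A.exists_max_image f hA
  obtain ⟨j, hj, hmin⟩ := B.exists_min_image f (card_pos.1 (hcard ▸ card_pos.2 hA))
  refine ⟨i, hi, j, hj, not_lt.1 fun hlt => hprod.not_lt ?_⟩
  calc ∏ i ∈ A, f i ≤ f i ^ #A := prod_le_pow_card A f (f i) hmax
    _ < f j ^ #A := pow_lt_pow_left' (card_pos.2 hA).ne' hlt
    _ ≤ ∏ j ∈ B, f j := hcard ▸ pow_card_le_prod B f (f j) hmin

theorem exists_mem_sdiff_le_of_prod_eq [DecidableEq ι] {I J : Finset ι} (hIJ : I ≠ J)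
    (hcard : #I = #J) (hprod : ∏ i ∈ I, f i = ∏ j ∈ J, f j) :
    ∃ i ∈ I \ J, ∃ j ∈ J \ I, f j ≤ f i := by
  have hne : (I \ J).Nonempty :=
    sdiff_nonempty.2 fun hsub => hIJ (eq_of_subset_of_card_le hsub hcard.ge)
  exact exists_le_of_prod_eq_of_card_eq hne (card_sdiff_comm hcard)
    (prod_sdiff_eq_prod_sdiff_iff.2 hprod)

end Finset

namespace HasPropP

variable {G H : Type*} [CommGroup G] [CommGroup H] {q r s : ℕ} {α : Fin q → G}

theorem comp_perm_s1 (h : HasPropP α r s) (σ : Equiv.Perm (Fin q)) : HasPropP (α ∘ σ) r s := by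
  intro T hT I hIT hI
  obtain ⟨J, hJT, hJ, hJI, hprod⟩ := h (T.map σ.toEmbedding) (by simpa) (I.map σ.toEmbedding)
    (map_subset_map.2 hIT) (by simpa)
  refine ⟨J.map σ.symm.toEmbedding, ?_, by simpa, ?_, ?_⟩
  · rw [← map_subset_map (f := σ.toEmbedding)]
    simpa [map_map] using hJT
  · rintro rfl
    exact hJI (by simp [map_map])
  · simpa [prod_map] using hprod

theorem comp_monoidHom (h : HasPropP α r s) (f : G →* H) : HasPropP (f ∘ α) r s := by
  intro T hT I hIT hI
  obtain ⟨J, hJT, hJ, hJI, hprod⟩ := h T hT I hIT hI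
  exact ⟨J, hJT, hJ, hJI, by simp only [Function.comp_apply, ← map_prod, hprod]⟩

theorem of_comp_injective {f : G →* H} (hf : Function.Injective f) (h : HasPropP (f ∘ α) r s) :
    HasPropP α r s := by
  intro T hT I hIT hI
  obtain ⟨J, hJT, hJ, hJI, hprod⟩ := h T hT I hIT hI
  exact ⟨J, hJT, hJ, hJI, hf (by simpa only [Function.comp_apply, map_prod] using hprod)⟩

end HasPropP

section LinearOrder

variable {L : Type*} [CommGroup L] [LinearOrder L] [IsOrderedMonoid L] {q r s m n : ℕ}
  {γ : Fin q → L}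

theorem HasPropP.exists_le_of_lower_upper (hγ : HasPropP γ r s) (hmn : m + n = r) (hrq : r ≤ q)
    (hs : m = s ∨ n = s) : ∃ i j : Fin q, (i : ℕ) < m ∧ q - n ≤ (j : ℕ) ∧ γ j ≤ γ i := by
  classical
  set B : Finset (Fin q) := {i | (i : ℕ) < m}
  set U : Finset (Fin q) := {i | q - n ≤ (i : ℕ)}
  have hB : #B = m := by rw [Fin.card_filter_val_lt]; omega
  have hU : #U = n := by
    have : U = ({i | (i : ℕ) < q - n} : Finset (Fin q))ᶜ := by ext; simp [U]
    rw [this, card_compl, Fintype.card_fin, Fin.card_filter_val_lt]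
    omega
  have hBU : Disjoint B U := by
    simp only [B, U, disjoint_left, mem_filter, mem_univ, true_and]
    omega
  have hT : #(B ∪ U) = r := by rw [card_union_of_disjoint hBU, hB, hU, hmn]
  have hmemB : ∀ {i}, i ∈ B ↔ (i : ℕ) < m := by simp [B]
  have hmemU : ∀ {i}, i ∈ U ↔ q - n ≤ (i : ℕ) := by simp [U]
  rcases hs with rfl | rfl
  · obtain ⟨J, hJT, hJ, hJB, hprod⟩ := hγ _ hT B subset_union_left hB
    obtain ⟨i, hi, j, hj, hle⟩ := exists_mem_sdiff_le_of_prod_eq hJB.symm (hB.trans hJ.symm) hprod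
    rw [mem_sdiff] at hi hj
    exact ⟨i, j, hmemB.1 hi.1, hmemU.1 ((mem_union.1 (hJT hj.1)).resolve_left hj.2), hle⟩
  · obtain ⟨J, hJT, hJ, hJU, hprod⟩ := hγ _ hT U subset_union_right hU
    obtain ⟨i, hi, j, hj, hle⟩ := exists_mem_sdiff_le_of_prod_eq hJU (hJ.trans hU.symm) hprod.symm
    rw [mem_sdiff] at hi hj
    exact ⟨i, j, hmemB.1 ((mem_union.1 (hJT hi.1)).resolve_right hi.2), hmemU.1 hj.1, hle⟩

theorem HasPropP.exists_eqOn_of_monotone (hγ : HasPropP γ r s) (hmono : Monotone γ)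
    (hmn : m + n = r) (hrq : r ≤ q) (hs : m = s ∨ n = s) :
    ∃ c, ∀ p : Fin q, m - 1 ≤ (p : ℕ) → (p : ℕ) ≤ q - n → γ p = c := by
  obtain ⟨i, j, hi, hj, hle⟩ := hγ.exists_le_of_lower_upper hmn hrq hs
  refine ⟨γ i, fun p hp₁ hp₂ => le_antisymm ((hmono ?_).trans hle) (hmono ?_)⟩
  · rw [Fin.le_def]; omega
  · rw [Fin.le_def]; omega

end LinearOrder

theorem HasPropP.exists_eqOn_card_of_linearOrder {L : Type*} [CommGroup L] [LinearOrder L]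
    [IsOrderedMonoid L] {q r s : ℕ} (hsr : s < r) (hrq : r ≤ q)
    (hr2s : r ≤ 2 * s) (hq2s : 2 * s - 1 ≤ q) {β : Fin q → L} (hβ : HasPropP β r s) :
    ∃ S : Finset (Fin q), #S = q + 2 - 2 * (r - s) ∧ ∀ i ∈ S, ∀ j ∈ S, β i = β j := by
  set σ := Tuple.sort β
  have hγ := hβ.comp_perm_s1 σ
  obtain ⟨c₁, h₁⟩ := hγ.exists_eqOn_of_monotone (Tuple.monotone_sort β) (m := s) (n := r - s)
    (by omega) hrq (.inl rfl)
  obtain ⟨c₂, h₂⟩ := hγ.exists_eqOn_of_monotone (Tuple.monotone_sort β) (m := r - s) (n := s)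
    (by omega) hrq (.inr rfl)
  -- the two intervals of constancy share the position `s - 1` and cover `[r - s - 1, q - (r - s)]`
  have hc : c₁ = c₂ := by
    rw [← h₁ ⟨s - 1, by omega⟩ le_rfl (by dsimp only; omega),
      ← h₂ ⟨s - 1, by omega⟩ (by dsimp only; omega) (by dsimp only; omega)]
  have hconst : ∀ p : Fin q, r - s - 1 ≤ (p : ℕ) → (p : ℕ) ≤ q - (r - s) → β (σ p) = c₂ := by
    intro p hp₁ hp₂
    rcases le_or_gt (p : ℕ) (q - s) with hp | hp
    · exact h₂ p hp₁ hp
    · exact hc ▸ h₁ p (by omega) hp₂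
  refine ⟨(Icc ⟨r - s - 1, by omega⟩ ⟨q - (r - s), by omega⟩).map σ.toEmbedding, ?_, ?_⟩
  · rw [card_map, Fin.card_Icc, Fin.val_mk, Fin.val_mk]
    omega
  · simp only [mem_map, mem_Icc, Fin.le_def, Equiv.toEmbedding_apply]
    rintro _ ⟨p, hp, rfl⟩ _ ⟨p', hp', rfl⟩
    rw [hconst p hp.1 hp.2, hconst p' hp'.1 hp'.2]

theorem exists_monoidHom_lex_injective (H : Type*) [CommGroup H] [Group.FG H]
    [IsMulTorsionFree H] :
    ∃ (n : ℕ) (f : H →* Multiplicative (Lex (Fin n →₀ ℤ))), Function.Injective f := by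
  have : Module.Finite ℤ (Additive H) := Module.Finite.iff_addGroup_fg.2 inferInstance
  let b := Module.finBasis ℤ (Additive H)
  exact ⟨_, AddMonoidHom.toMultiplicativeRight
    ((toLexAddEquiv _).toAddMonoidHom.comp b.repr.toAddMonoidHom),
    (toLexAddEquiv _).injective.comp b.repr.injective⟩

theorem stmt1_general {G : Type*} [CommGroup G] (hG : ∀ g : G, g ≠ 1 → ¬IsOfFinOrder g)
    {q r s : ℕ} (hsr : s < r) (hrq : r ≤ q)
    (hr2s : r ≤ 2 * s) (hq2s : 2 * s - 1 ≤ q)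
    (α : Fin q → G) (hα : HasPropP α r s) :
    ∃ S : Finset (Fin q), S.card = q + 2 - 2 * (r - s) ∧ ∀ i ∈ S, ∀ j ∈ S, α i = α j := by
  have : IsMulTorsionFree G := isMulTorsionFree_iff_not_isOfFinOrder.2 hG
  let H := Subgroup.closure (Set.range α)
  obtain ⟨n, f, hf⟩ := exists_monoidHom_lex_injective H
  let α' : Fin q → H := fun i => ⟨α i, Subgroup.subset_closure (Set.mem_range_self i)⟩
  have hα' : HasPropP α' r s := HasPropP.of_comp_injective H.subtype_injective hα
  obtain ⟨S, hcard, hS⟩ :=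
    (hα'.comp_monoidHom f).exists_eqOn_card_of_linearOrder hsr hrq hr2s hq2s
  exact ⟨S, hcard, fun i hi j hj => congrArg Subtype.val (hf (hS i hi j hj))⟩

theorem stmt1 {G : Type*} [CommGroup G] (hG : ∀ g : G, g ≠ 1 → ¬IsOfFinOrder g)
    {q r s : ℕ} (hs : 1 ≤ s) (hsr : s < r) (hrq : r ≤ q)
    (hr2s : r ≤ 2 * s) (hq2s : 2 * s - 1 ≤ q)
    (α : Fin q → G) (hα : HasPropP α r s) :
    ∃ S : Finset (Fin q), S.card = q + 2 - 2 * (r - s) ∧ ∀ i ∈ S, ∀ j ∈ S, α i = α j :=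
  stmt1_general hG hsr hrq hr2s hq2s α hα
end

section
/- A q-tuple (α₁,…,α_q) of elements of a torsion-free abelian group G has the property (P_{r,s}) if and only if it has the property (P_{r,r−s}), where q ≥ r > s ≥ 1 and r > r−s ≥ 1. -/
/-- A monoid is torsion-free if its only element of finite order is `1`
(the definition `Monoid.IsTorsionFree` of the older Mathlib, since removed). -/
def Monoid.IsTorsionFree (G : Type*) [Monoid G] : Prop :=
  ∀ g : G, g ≠ 1 → ¬IsOfFinOrder g
/-! Passing to complements inside the chosen `r` indices, `I ↦ T \ I`, is an involution on the
subsets of `T` exchanging size `s` with size `r - s`; since `∏_{T \ I} α = (∏_T α) / ∏_I α`,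
it turns equal products over `s`-subsets into equal products over `(r - s)`-subsets. -/

open Finset

section

variable {G : Type*} [CommGroup G] {q : ℕ} {α : Fin q → G} {r s : ℕ}

theorem HasPropP.sub (hsr : s ≤ r) (H : HasPropP α r s) : HasPropP α r (r - s) := by
  intro T hT I hIT hI
  have hTI : #(T \ I) = s := by rw [card_sdiff_of_subset hIT, hT, hI, Nat.sub_sub_self hsr]
  obtain ⟨J, hJT, hJ, hJI, hprod⟩ := H T hT (T \ I) sdiff_subset hTI
  refine ⟨T \ J, sdiff_subset, by rw [card_sdiff_of_subset hJT, hT, hJ], ?_, ?_⟩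
  · rintro rfl
    exact hJI (Finset.sdiff_sdiff_eq_self hJT).symm
  · calc ∏ i ∈ I, α i = (∏ i ∈ T, α i) / ∏ i ∈ T \ I, α i := by
          rw [prod_sdiff_eq_div hIT, div_div_self']
      _ = ∏ j ∈ T \ J, α j := by rw [hprod, prod_sdiff_eq_div hJT]

theorem hasPropP_iff_hasPropP_sub (hsr : s ≤ r) : HasPropP α r s ↔ HasPropP α r (r - s) :=
  ⟨HasPropP.sub hsr, fun H => Nat.sub_sub_self hsr ▸ H.sub (Nat.sub_le r s)⟩

end

theorem stmt3_general {G : Type*} [CommGroup G]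
    {q r s : ℕ} (hsr : s < r)
    (α : Fin q → G) :
    HasPropP α r s ↔ HasPropP α r (r - s) :=
  hasPropP_iff_hasPropP_sub hsr.le

theorem stmt3 {G : Type*} [CommGroup G] (hG : Monoid.IsTorsionFree G)
    {q r s : ℕ} (hs : 1 ≤ s) (hsr : s < r) (hrq : r ≤ q)
    (α : Fin q → G) :
    HasPropP α r s ↔ HasPropP α r (r - s) :=
  stmt3_general hsr α
end

section
/- Let n ≥ 2 and let H₁,…,H_{n+3} be hyperplanes in ℙ^n(ℂ) in general position. Then there does not exist a projective linear transformation L of ℙ^n such that L(H_i) = H_i for 1 ≤ i ≤ n+1, L(H_{n+2}) = H_{n+3}, and L(H_{n+3}) = H_{n+2}. -/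
/-- A family of hyperplanes in `ℙ^n`, given by their coefficient vectors in `ℂ^{n+1}`,
is in general position if the coefficient vectors of any at most `n+1` of them are
linearly independent over `ℂ`. -/
def InGenPos {q n : ℕ} (H : Fin q → (Fin (n + 1) → ℂ)) : Prop :=
  ∀ S : Finset (Fin q), S.card ≤ n + 1 →
    LinearIndependent ℂ (fun i : {x // x ∈ S} => H i.1)

/-- The projective linear transformation of `ℙ^n` induced by the invertible matrix `M`
maps the hyperplane with coefficient vector `u` onto the hyperplane with coefficient
vector `v`:  `x ∈ ker u ↔ M x ∈ ker v`, i.e. `v ᵀM` is proportional to `u`. -/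
def MapsHyperplane {n : ℕ} (M : Matrix (Fin (n + 1)) (Fin (n + 1)) ℂ)
    (u v : Fin (n + 1) → ℂ) : Prop :=
  ∃ c : ℂ, c ≠ 0 ∧ Matrix.vecMul v M = c • u

/-! The forms of `H₁, …, H_{n+1}` are a basis of the dual space in which the transpose of `L`
is diagonal, `diag (c_i)`. Write `L* H_{n+2} = b H_{n+3}` and `L* H_{n+3} = a H_{n+2}`. General
position makes every coordinate of `H_{n+2}` nonzero, so applying `L*` twice gives `c_i ^ 2 = a b`
for all `i`. Hence the `c_i` take at most two values, and as there are `n + 1 ≥ 3` of them, one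
value `γ` is missed by at most `n - 1` indices. Then `γ H_{n+2} - b H_{n+3} = (γ - L*) H_{n+2}`
lies in the span of those at most `n - 1` forms, a dependence among at most `n + 1` of the `H_i`. -/

open Module Submodule

namespace Module.Basis

variable {K V ι : Type*} [Field K] [AddCommGroup V] [Module K V]
  {B : Basis ι K V} {φ : V →ₗ[K] V} {c : ι → K}

theorem repr_apply_of_apply_eq_smul (hφ : ∀ i, φ (B i) = c i • B i) (v : V)
    (i : ι) : B.repr (φ v) i = c i * B.repr v i := by
  classical
  have : (B.coord i).comp φ = c i • B.coord i := B.ext fun j => by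
    rcases eq_or_ne i j with rfl | hij
    · simp [hφ]
    · simp [hφ, hij]
  exact LinearMap.congr_fun this v

theorem sq_eq_mul_of_apply_swap (hφ : ∀ i, φ (B i) = c i • B i) {w w' : V}
    {a b : K} (hw : φ w = b • w') (hw' : φ w' = a • w) {i : ι} (hi : B.repr w i ≠ 0) :
    c i ^ 2 = a * b := by
  have h₁ := B.repr_apply_of_apply_eq_smul hφ w i
  have h₂ := B.repr_apply_of_apply_eq_smul hφ w' i
  rw [hw, map_smul, Finsupp.smul_apply, smul_eq_mul] at h₁
  rw [hw', map_smul, Finsupp.smul_apply, smul_eq_mul] at h₂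
  refine mul_right_cancel₀ hi ?_
  linear_combination c i * h₁.symm + b * h₂.symm

theorem smul_sub_apply_mem_span (hφ : ∀ i, φ (B i) = c i • B i) (γ : K) (v : V) :
    γ • v - φ v ∈ span K (B '' {i | c i ≠ γ}) := by
  rw [B.mem_span_image]
  intro i hi
  contrapose! hi
  simp [B.repr_apply_of_apply_eq_smul hφ, not_not.mp hi]

end Module.Basis

open Finset in
theorem exists_card_filter_ne_add_two_le {ι α : Type*} [Fintype ι] [DecidableEq α] {c : ι → α}
    {x y : α} (hc : ∀ i, c i = x ∨ c i = y) (hι : 3 ≤ Fintype.card ι) :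
    ∃ v, #{i | c i ≠ v} + 2 ≤ Fintype.card ι := by
  by_cases hx : 2 ≤ #{i | c i = x}
  · refine ⟨x, ?_⟩
    have := Finset.card_filter_add_card_filter_not (s := Finset.univ) (fun i => c i = x)
    simp only [Finset.card_univ, ← ne_eq] at this
    omega
  · refine ⟨y, ?_⟩
    have : #{i | c i ≠ y} ≤ #{i | c i = x} :=
      Finset.card_le_card fun i => by simpa using (hc i).resolve_right
    omega

theorem mem_span_insert_of_smul_sub_mem {K V : Type*} [Field K] [AddCommGroup V] [Module K V]
    {s : Set V} {v w : V} {a b : K} (hb : b ≠ 0) (h : a • v - b • w ∈ span K s) :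
    w ∈ span K (insert v s) :=
  mem_span_insert.2 ⟨b⁻¹ * a, -b⁻¹ • (a • v - b • w), smul_mem _ _ h, by
    simp [smul_sub, smul_smul, hb]⟩

namespace InGenPos

variable {q n : ℕ} {H : Fin q → Fin (n + 1) → ℂ}

theorem apply_notMem_span (hgen : InGenPos H) {S : Finset (Fin q)} (hS : S.card ≤ n)
    {j : Fin q} (hj : j ∉ S) : H j ∉ span ℂ (H '' S) := by
  have : LinearIndepOn ℂ H (insert j S : Finset (Fin q)) :=
    hgen _ ((Finset.card_insert_le j S).trans (by omega))
  rw [Finset.coe_insert, linearIndepOn_insert (by simpa using hj)] at this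
  exact this.2

theorem linearIndependent_comp (hgen : InGenPos H) {ι : Type*} [Fintype ι] (e : ι ↪ Fin q)
    (hι : Fintype.card ι ≤ n + 1) : LinearIndependent ℂ (H ∘ e) := by
  have : LinearIndepOn ℂ H (Finset.univ.map e : Finset (Fin q)) := hgen _ (by simpa using hι)
  rwa [Finset.coe_map, Finset.coe_univ, Set.image_univ, linearIndepOn_range_iff e.injective]
    at this

noncomputable def basis (hgen : InGenPos H) (e : Fin (n + 1) ↪ Fin q) :
    Basis (Fin (n + 1)) ℂ (Fin (n + 1) → ℂ) :=
  basisOfLinearIndependentOfCardEqFinrank (hgen.linearIndependent_comp e (by simp)) (by simp)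

theorem coe_basis (hgen : InGenPos H) (e : Fin (n + 1) ↪ Fin q) :
    ⇑(hgen.basis e) = H ∘ e :=
  coe_basisOfLinearIndependentOfCardEqFinrank (ι := Fin (n + 1)) _ _

theorem basis_image (hgen : InGenPos H) (e : Fin (n + 1) ↪ Fin q) (T : Finset (Fin (n + 1))) :
    hgen.basis e '' T = H '' (T.map e : Finset (Fin q)) := by
  rw [coe_basis, Set.image_comp, Finset.coe_map]

theorem basis_repr_ne_zero (hgen : InGenPos H) (e : Fin (n + 1) ↪ Fin q) {j : Fin q}
    (hj : ∀ i, e i ≠ j) (i : Fin (n + 1)) : (hgen.basis e).repr (H j) i ≠ 0 := by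
  intro h
  refine hgen.apply_notMem_span (S := (Finset.univ.erase i).map e) (j := j) (by simp)
    (by simp [hj]) ?_
  rw [← hgen.basis_image, Basis.mem_span_image]
  intro k hk
  simp only [Finset.coe_erase, Finset.coe_univ, Set.mem_sdiff, Set.mem_univ, true_and]
  rintro rfl
  exact Finsupp.mem_support_iff.1 hk h

theorem smul_sub_notMem_span (hgen : InGenPos H) {S : Finset (Fin q)} (hS : S.card + 2 ≤ n + 1)
    {j k : Fin q} (hjk : j ≠ k) (hk : k ∉ S) (a : ℂ) {b : ℂ} (hb : b ≠ 0) :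
    a • H j - b • H k ∉ span ℂ (H '' S) := fun h =>
  hgen.apply_notMem_span (S := insert j S) (j := k)
    ((Finset.card_insert_le _ _).trans (by omega))
    (by simp [hjk.symm, hk]) (by
      rw [Finset.coe_insert, Set.image_insert_eq]
      exact mem_span_insert_of_smul_sub_mem hb h)

end InGenPos

theorem stmt8 {n : ℕ} (hn : 2 ≤ n) (H : Fin (n + 3) → (Fin (n + 1) → ℂ))
    (hgen : InGenPos H) :
    ¬∃ M : Matrix (Fin (n + 1)) (Fin (n + 1)) ℂ, IsUnit M.det ∧
      (∀ i : Fin (n + 3), (i : ℕ) < n + 1 → MapsHyperplane M (H i) (H i)) ∧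
      MapsHyperplane M (H ⟨n + 1, by omega⟩) (H ⟨n + 2, by omega⟩) ∧
      MapsHyperplane M (H ⟨n + 2, by omega⟩) (H ⟨n + 1, by omega⟩) := by
  rintro ⟨M, -, hfix, ⟨a, -, hw'⟩, ⟨b, hb, hw⟩⟩
  let e : Fin (n + 1) ↪ Fin (n + 3) := Fin.castLEEmb (by omega)
  have he (j : Fin (n + 3)) (hj : n + 1 ≤ j) (i : Fin (n + 1)) : e i ≠ j :=
    fun h => absurd i.isLt (by simpa [e, ← h] using hj)
  let B := hgen.basis e
  choose c hc using fun i : Fin (n + 1) => (hfix (e i) i.isLt).imp fun _ => And.right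
  have hB : ∀ i, M.vecMulLinear (B i) = c i • B i := by simpa [B, InGenPos.coe_basis] using hc
  have hsq (i) : c i ^ 2 = a * b :=
    B.sq_eq_mul_of_apply_swap hB hw hw' (hgen.basis_repr_ne_zero e (he _ le_rfl) i)
  obtain ⟨γ, hγ⟩ := exists_card_filter_ne_add_two_le
    (fun i => sq_eq_sq_iff_eq_or_eq_neg.1 ((hsq i).trans (hsq 0).symm)) (by rw [Fintype.card_fin]; omega)
  have hspan := B.smul_sub_apply_mem_span hB γ (H ⟨n + 1, by omega⟩)
  rw [Matrix.vecMulLinear_apply, hw, ← Finset.coe_filter_univ, hgen.basis_image] at hspan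
  exact hgen.smul_sub_notMem_span (by simpa using hγ) (by simp [Fin.ext_iff])
    (by simp [he]) γ hb hspan
end

section
/- Let l(i,τ) for 1 ≤ i ≤ q, 1 ≤ τ ≤ t be integers and let s ≥ 1. Define p₁ = 1 and recursively p_u = 2s·Σ_{τ=1}^{u−1}(max_{1≤i≤q}|l(i,τ)|·p_τ) + 1 for 2 ≤ u ≤ t, and set l_i = Σ_{τ=1}^t l(i,τ)·p_τ. Then for any indices i₁,…,i_k, j₁,…,j_k ∈ {1,…,q} with 1 ≤ k ≤ s, the equality l_{i₁}+…+l_{i_k} = l_{j₁}+…+l_{j_k} holds if and only if l(i₁,τ)+…+l(i_k,τ) = l(j₁,τ)+…+l(j_k,τ) for every 1 ≤ τ ≤ t. -/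
/-!
Write `d τ` for the difference of the two column sums `∑ₐ l(iₐ, τ) - ∑ₐ l(jₐ, τ)`; then
`|d τ| ≤ 2 s maxᵢ |l(i, τ)|`, and the recursion makes every weight `p u` exceed
`∑_{τ < u} |d τ| p τ`. Hence `∑ τ, d τ p τ = 0` forces `d τ = 0`, working down from the largest
weight, exactly as for digits in a mixed-radix expansion.
-/

open Finset

lemma abs_sum_sub_sum_le {ι : Type*} (S : Finset ι) {f g : ι → ℤ} {m : ℤ}
    (hf : ∀ a ∈ S, |f a| ≤ m) (hg : ∀ a ∈ S, |g a| ≤ m) :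
    |∑ a ∈ S, f a - ∑ a ∈ S, g a| ≤ 2 * #S * m := calc
  _ = |∑ a ∈ S, (f a - g a)| := by rw [sum_sub_distrib]
  _ ≤ ∑ a ∈ S, |f a - g a| := abs_sum_le_sum_abs _ _
  _ ≤ ∑ _a ∈ S, 2 * m := sum_le_sum fun a ha => by
      linarith [abs_sub (f a) (g a), hf a ha, hg a ha]
  _ = 2 * #S * m := by rw [sum_const, nsmul_eq_mul]; ring

section Dominant

variable {d B p : ℕ → ℤ} {t : ℕ}

lemma pos_of_sum_mul_lt (hB : ∀ τ, 0 ≤ B τ)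
    (hp : ∀ u ∈ Icc 1 t, ∑ τ ∈ Icc 1 (u - 1), B τ * p τ < p u) :
    ∀ u ∈ Icc 1 t, 0 < p u := by
  intro u
  induction u using Nat.strong_induction_on with
  | _ u ih =>
    intro hu
    refine lt_of_le_of_lt (sum_nonneg fun τ hτ => ?_) (hp u hu)
    have := mem_Icc.1 hτ
    have := mem_Icc.1 hu
    exact mul_nonneg (hB τ) (ih τ (by omega) (mem_Icc.2 ⟨by omega, by omega⟩)).le

theorem eq_zero_of_sum_mul_eq_zero (hdB : ∀ τ, |d τ| ≤ B τ)
    (hp : ∀ u ∈ Icc 1 t, ∑ τ ∈ Icc 1 (u - 1), B τ * p τ < p u)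
    (hsum : ∑ τ ∈ Icc 1 t, d τ * p τ = 0) :
    ∀ τ ∈ Icc 1 t, d τ = 0 := by
  induction t with
  | zero => simp
  | succ t ih =>
    have hpos := pos_of_sum_mul_lt (fun τ => (abs_nonneg _).trans (hdB τ)) hp
    have hp' : ∀ u ∈ Icc 1 t, ∑ τ ∈ Icc 1 (u - 1), B τ * p τ < p u := fun u hu =>
      hp u (Icc_subset_Icc_right t.le_succ hu)
    have hpos' : ∀ τ ∈ Icc 1 t, 0 < p τ := fun τ hτ =>
      hpos τ (Icc_subset_Icc_right t.le_succ hτ)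
    rw [sum_Icc_succ_top (by omega)] at hsum
    have hlower : |∑ τ ∈ Icc 1 t, d τ * p τ| < p (t + 1) := calc
      _ ≤ ∑ τ ∈ Icc 1 t, |d τ| * p τ := (abs_sum_le_sum_abs _ _).trans_eq <|
          sum_congr rfl fun τ hτ => by rw [abs_mul, abs_of_pos (hpos' τ hτ)]
      _ ≤ ∑ τ ∈ Icc 1 t, B τ * p τ := sum_le_sum fun τ hτ =>
          mul_le_mul_of_nonneg_right (hdB τ) (hpos' τ hτ).le
      _ < p (t + 1) := hp (t + 1) (by simp)
    have htop : d (t + 1) = 0 := by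
      by_contra hne
      have hpt := hpos (t + 1) (by simp)
      have : p (t + 1) ≤ |d (t + 1) * p (t + 1)| := by
        rw [abs_mul, abs_of_pos hpt]
        exact le_mul_of_one_le_left hpt.le (Int.one_le_abs hne)
      rw [eq_neg_of_add_eq_zero_right hsum, abs_neg] at this
      exact this.not_gt hlower
    rw [htop, zero_mul, add_zero] at hsum
    intro τ hτ
    rcases (mem_Icc.1 hτ).2.lt_or_eq with hlt | rfl
    · exact ih hp' hsum τ (mem_Icc.2 ⟨(mem_Icc.1 hτ).1, by omega⟩)
    · exact htop

end Dominant

theorem stmt17_general (q t s : ℕ) (l : ℕ → ℕ → ℤ) (p : ℕ → ℤ)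
    (hp1 : p 1 = 1)
    (hpu : ∀ u, 2 ≤ u → u ≤ t →
      p u = 2 * (s : ℤ) * (∑ τ ∈ Finset.Icc 1 (u - 1),
        (((Finset.Icc 1 q).sup (fun i => (l i τ).natAbs) : ℕ) : ℤ) * p τ) + 1) :
    ∀ k : ℕ, 1 ≤ k → k ≤ s → ∀ i j : Fin k → ℕ,
      (∀ a, i a ∈ Finset.Icc 1 q) → (∀ a, j a ∈ Finset.Icc 1 q) →
      ((∑ a, ∑ τ ∈ Finset.Icc 1 t, l (i a) τ * p τ) =
          (∑ a, ∑ τ ∈ Finset.Icc 1 t, l (j a) τ * p τ) ↔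
        ∀ τ ∈ Finset.Icc 1 t, (∑ a, l (i a) τ) = ∑ a, l (j a) τ) := by
  intro k _ hks i j hi hj
  set M : ℕ → ℤ := fun τ => (((Icc 1 q).sup (fun i => (l i τ).natAbs) : ℕ) : ℤ)
  have hM : ∀ i ∈ Icc 1 q, ∀ τ, |l i τ| ≤ M τ := fun i hi τ => by
    rw [Int.abs_eq_natAbs]
    exact Int.ofNat_le.2 (le_sup (f := fun i => (l i τ).natAbs) hi)
  have hbound : ∀ τ, |∑ a, l (i a) τ - ∑ a, l (j a) τ| ≤ 2 * s * M τ := fun τ => by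
    refine (abs_sum_sub_sum_le univ (fun a _ => hM _ (hi a) τ) fun a _ => hM _ (hj a) τ).trans ?_
    rw [card_univ, Fintype.card_fin]
    gcongr
  have hdom : ∀ u ∈ Icc 1 t, ∑ τ ∈ Icc 1 (u - 1), 2 * s * M τ * p τ < p u := by
    intro u hu
    rcases (mem_Icc.1 hu).1.eq_or_lt with rfl | h2
    · simp [hp1]
    · rw [hpu u h2 (mem_Icc.1 hu).2]
      simp_rw [mul_assoc, ← mul_sum]
      exact lt_add_one _
  simp_rw [sum_comm (s := univ), ← sum_mul]
  refine ⟨fun h τ hτ => sub_eq_zero.1 (eq_zero_of_sum_mul_eq_zero hbound hdom ?_ τ hτ),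
    fun h => sum_congr rfl fun τ hτ => by rw [h τ hτ]⟩
  simp [sub_mul, sum_sub_distrib, h]

theorem stmt17 (q t s : ℕ) (hs : 1 ≤ s) (l : ℕ → ℕ → ℤ) (p : ℕ → ℤ)
    (hp1 : p 1 = 1)
    (hpu : ∀ u, 2 ≤ u → u ≤ t →
      p u = 2 * (s : ℤ) * (∑ τ ∈ Finset.Icc 1 (u - 1),
        (((Finset.Icc 1 q).sup (fun i => (l i τ).natAbs) : ℕ) : ℤ) * p τ) + 1) :
    ∀ k : ℕ, 1 ≤ k → k ≤ s → ∀ i j : Fin k → ℕ,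
      (∀ a, i a ∈ Finset.Icc 1 q) → (∀ a, j a ∈ Finset.Icc 1 q) →
      ((∑ a, ∑ τ ∈ Finset.Icc 1 t, l (i a) τ * p τ) =
          (∑ a, ∑ τ ∈ Finset.Icc 1 t, l (j a) τ * p τ) ↔
        ∀ τ ∈ Finset.Icc 1 t, (∑ a, l (i a) τ) = ∑ a, l (j a) τ) :=
  stmt17_general q t s l p hp1 hpu
end
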